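/- Let y ~ N(0,1), r ∈ (0,1), ξ_r := ∑_{k=0}^∞ r^k/(k+2), λ ∈ ℝ, and t > 0 with 2t|λ| ≤ r. Then E[exp(tλ(y² - 1))] ≤ exp(2t²ξ_r λ²); i.e., λ(y²-1) is sub-exponential with explicit parameters. -/

import Mathlib

open MeasureTheory ProbabilityTheory

noncomputable def xi (r : ℝ) : ℝ := ∑' k : ℕ, r ^ k / ((k : ℝ) + 2)

/-!
Writing `s = tλ`, the Gaussian integral gives `E[exp(s(y² - 1))] = exp(-s) / √(1 - 2s)`, whose
logarithm is `(-log(1 - 2s) - 2s) / 2 = 2s² ∑ₙ (2s)ⁿ/(n + 2)` by the series of `log(1 - x)`.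
Since `|2s| ≤ r`, this series is dominated termwise by `ξ_r`.
-/

open Real
open scoped NNReal

lemma integral_exp_mul_sq_gaussianReal {v : ℝ≥0} (hv : v ≠ 0) {s : ℝ} (hs : 2 * s * v < 1) :
    ∫ y, exp (s * y ^ 2) ∂(gaussianReal 0 v) = (√(1 - 2 * s * v))⁻¹ := by
  have hv₀ : (0 : ℝ) < v := NNReal.coe_pos.2 (pos_iff_ne_zero.2 hv)
  have hdensity : ∀ y : ℝ, gaussianPDFReal 0 v y • exp (s * y ^ 2)
      = (√(2 * π * v))⁻¹ * exp (-((2 * v : ℝ)⁻¹ - s) * y ^ 2) := by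
    intro y
    rw [gaussianPDFReal, smul_eq_mul, mul_assoc, ← exp_add]
    congr 2
    field_simp
    ring
  simp_rw [integral_gaussianReal_eq_integral_smul hv, hdensity, integral_const_mul,
    integral_gaussian]
  have hb : 0 < (2 * v : ℝ)⁻¹ - s := by
    rw [sub_pos, ← one_div, lt_div_iff₀ (by positivity)]
    linarith
  rw [← Real.sqrt_inv, ← Real.sqrt_mul (by positivity), ← Real.sqrt_inv]
  congr 1
  field_simp

lemma summable_pow_div_add_two {x : ℝ} (hx : |x| < 1) :
    Summable fun n : ℕ => x ^ n / ((n : ℝ) + 2) := by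
  refine .of_norm_bounded (summable_geometric_of_lt_one (abs_nonneg x) hx) fun n => ?_
  rw [norm_div, norm_pow, Real.norm_eq_abs, Real.norm_of_nonneg (by positivity)]
  exact div_le_self (by positivity) (by linarith [n.cast_nonneg (α := ℝ)])

lemma neg_log_one_sub_sub_eq {x : ℝ} (hx : |x| < 1) :
    -log (1 - x) - x = x ^ 2 * ∑' n : ℕ, x ^ n / ((n : ℝ) + 2) := by
  have hlog := (hasSum_nat_add_iff' 1).2 (hasSum_pow_div_log_of_abs_lt_one hx)
  rw [← tsum_mul_left]
  convert hlog.tsum_eq.symm using 1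
  · simp
  · congr 1 with n
    push_cast
    ring

lemma tsum_pow_div_add_two_le_xi {x r : ℝ} (hxr : |x| ≤ r) (hr : r < 1) :
    ∑' n : ℕ, x ^ n / ((n : ℝ) + 2) ≤ xi r := by
  have hr₀ : 0 ≤ r := (abs_nonneg x).trans hxr
  refine (summable_pow_div_add_two (hxr.trans_lt hr)).tsum_le_tsum (fun n => ?_)
    (summable_pow_div_add_two (by rwa [abs_of_nonneg hr₀]))
  calc x ^ n / ((n : ℝ) + 2) ≤ |x| ^ n / ((n : ℝ) + 2) := by
        gcongr ?_ / _
        exact (le_abs_self _).trans_eq (abs_pow x n)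
    _ ≤ r ^ n / ((n : ℝ) + 2) := by gcongr

lemma exp_neg_mul_inv_sqrt_le {r s : ℝ} (hr : r < 1) (hs : 2 * |s| ≤ r) :
    exp (-s) * (√(1 - 2 * s))⁻¹ ≤ exp (2 * s ^ 2 * xi r) := by
  have h2s : |2 * s| ≤ r := by rwa [abs_mul, abs_two]
  have hpos : 0 < 1 - 2 * s := by linarith [le_abs_self (2 * s)]
  have hinv : (√(1 - 2 * s))⁻¹ = exp (-(log (1 - 2 * s) / 2)) := by
    rw [exp_neg, ← log_sqrt hpos.le, exp_log (sqrt_pos.2 hpos)]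
  have hseries := neg_log_one_sub_sub_eq (h2s.trans_lt hr)
  rw [hinv, ← exp_add, exp_le_exp]
  calc -s + -(log (1 - 2 * s) / 2)
      = 2 * s ^ 2 * ∑' n : ℕ, (2 * s) ^ n / ((n : ℝ) + 2) := by linear_combination hseries / 2
    _ ≤ 2 * s ^ 2 * xi r := by gcongr; exact tsum_pow_div_add_two_le_xi h2s hr

theorem subexp_bound (r : ℝ) (hr : r ∈ Set.Ioo (0 : ℝ) 1) (lam t : ℝ) (ht : 0 < t)
    (htl : 2 * t * |lam| ≤ r) :
    ∫ y, Real.exp (t * lam * (y ^ 2 - 1)) ∂(gaussianReal 0 1)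
      ≤ Real.exp (2 * t ^ 2 * xi r * lam ^ 2) := by
  have hs : 2 * |t * lam| ≤ r := by rwa [abs_mul, abs_of_pos ht, ← mul_assoc]
  have hs_lt : 2 * (t * lam) * ((1 : ℝ≥0) : ℝ) < 1 := by
    rw [NNReal.coe_one, mul_one]
    linarith [le_abs_self (t * lam), hr.2]
  calc ∫ y, exp (t * lam * (y ^ 2 - 1)) ∂(gaussianReal 0 1)
      = exp (-(t * lam)) * ∫ y, exp (t * lam * y ^ 2) ∂(gaussianReal 0 1) := by
        rw [← integral_const_mul]
        congr 1 with y
        rw [← exp_add]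
        ring_nf
    _ ≤ exp (2 * (t * lam) ^ 2 * xi r) := by
        rw [integral_exp_mul_sq_gaussianReal one_ne_zero hs_lt, NNReal.coe_one, mul_one]
        exact exp_neg_mul_inv_sqrt_le hr.2 hs
    _ = exp (2 * t ^ 2 * xi r * lam ^ 2) := by ring_nf
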